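/- arXiv:2405.12729 — 4 statements merged into one kernel-verified Lean document; each statement's English description precedes it below -/
import Mathlib

section
/- Let p, q ∈ (1,∞) with 1/p + 1/q = 1 and γ > 0. For every absolutely continuous f : [0,1] → ℝ with f' ∈ L^q([0,1]), |∫₀¹ f(x) dx| ≤ (|f(0)|^q + γ^{-q/2} ∫₀¹ |f'(t)|^q dt)^{1/q} · (1 + γ^{p/2}/(p+1))^{1/p}. -/
open MeasureTheory

/-- for absolutely continuous `f` on `[0,1]` with derivative `f'` in `L_q`
(expressed via the fundamental theorem of calculus representation `f x = f 0 + ∫₀ˣ f'`),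
the integral of `f` is bounded by the weighted anchored `q`-norm times the initial error. -/
theorem stmt3 (p q γ : ℝ) (hp : 1 < p) (hq : 1 < q) (hpq : 1/p + 1/q = 1) (hγ : 0 < γ)
    (f f' : ℝ → ℝ)
    (hac : ∀ x ∈ Set.Icc (0:ℝ) 1, f x = f 0 + ∫ t in (0:ℝ)..x, f' t)
    (hf'int : IntervalIntegrable f' volume 0 1)
    (hf'Lq : IntervalIntegrable (fun t => |f' t| ^ q) volume 0 1) :
    |∫ x in (0:ℝ)..1, f x| ≤
      (|f 0| ^ q + γ ^ (-(q/2)) * ∫ t in (0:ℝ)..1, |f' t| ^ q) ^ (1/q) *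
        (1 + γ ^ (p/2) / (p + 1)) ^ (1/p) := by
  have h2 : (0:ℝ) ≤ 1 := zero_le_one
  have hq0 : (0:ℝ) < q := lt_trans one_pos hq
  have hp0 : (0:ℝ) < p := lt_trans one_pos hp
  have hγ' : (0:ℝ) ≤ γ := hγ.le
  haveI : IsProbabilityMeasure (volume.restrict (Set.Ioc (0:ℝ) 1)) := by
    constructor
    rw [Measure.restrict_apply_univ, Real.volume_Ioc]
    norm_num
  have hconj : q.HolderConjugate p := by
    refine ⟨?_, hq0, hp0⟩
    · rw [inv_one, ← one_div, ← one_div, add_comm]; exact hpq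
  have hmeas : AEStronglyMeasurable f' (volume.restrict (Set.Ioc (0:ℝ) 1)) :=
    hf'int.1.aestronglyMeasurable
  -- the indicator function for Fubini
  set F : ℝ × ℝ → ℝ := fun z => Set.indicator {w : ℝ × ℝ | w.2 ≤ w.1} (fun w => f' w.2) z with hF
  have hind : Integrable F ((volume.restrict (Set.Ioc (0:ℝ) 1)).prod
      (volume.restrict (Set.Ioc (0:ℝ) 1))) := by
    refine Integrable.indicator ?_ (measurableSet_le measurable_snd measurable_fst)
    have h1 : Integrable (fun z : ℝ × ℝ => (1:ℝ) * f' z.2)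
        ((volume.restrict (Set.Ioc (0:ℝ) 1)).prod (volume.restrict (Set.Ioc (0:ℝ) 1))) :=
      (integrable_const (1:ℝ)).mul_prod hf'int.1
    simpa using h1
  have hinner1 : ∀ x ∈ Set.Ioc (0:ℝ) 1,
      (∫ t in Set.Ioc (0:ℝ) 1, F (x, t)) = ∫ t in (0:ℝ)..x, f' t := by
    intro x hx
    have he : (fun t => F (x, t)) = Set.indicator (Set.Iic x) f' := by
      funext t; simp [hF, Set.indicator_apply]
    rw [he, integral_indicator measurableSet_Iic,
      Measure.restrict_restrict measurableSet_Iic]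
    have hset : Set.Iic x ∩ Set.Ioc 0 1 = Set.Ioc 0 x := by
      ext t
      simp only [Set.mem_inter_iff, Set.mem_Iic, Set.mem_Ioc]
      constructor
      · rintro ⟨h1, h2', _⟩; exact ⟨h2', h1⟩
      · rintro ⟨h1, h2'⟩; exact ⟨h2', h1, le_trans h2' hx.2⟩
    rw [hset, ← intervalIntegral.integral_of_le hx.1.le]
  have hinner2 : ∀ t ∈ Set.Ioc (0:ℝ) 1,
      (∫ x in Set.Ioc (0:ℝ) 1, F (x, t)) = (1 - t) * f' t := by
    intro t ht
    have he : (fun x => F (x, t)) = Set.indicator (Set.Ici t) (fun _ => f' t) := by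
      funext x; simp [hF, Set.indicator_apply]
    rw [he, integral_indicator measurableSet_Ici, setIntegral_const,
      measureReal_def, Measure.restrict_apply measurableSet_Ici]
    have hset : Set.Ici t ∩ Set.Ioc 0 1 = Set.Icc t 1 := by
      ext x
      simp only [Set.mem_inter_iff, Set.mem_Ici, Set.mem_Ioc, Set.mem_Icc]
      constructor
      · rintro ⟨h1, _, h3⟩; exact ⟨h1, h3⟩
      · rintro ⟨h1, h2'⟩; exact ⟨h1, lt_of_lt_of_le ht.1 h1, h2'⟩
    rw [hset, Real.volume_Icc, ENNReal.toReal_ofReal (by linarith [ht.2] : (0:ℝ) ≤ 1 - t),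
      smul_eq_mul]
  have hswap : (∫ x in Set.Ioc (0:ℝ) 1, ∫ t in Set.Ioc (0:ℝ) 1, F (x, t))
      = ∫ t in Set.Ioc (0:ℝ) 1, ∫ x in Set.Ioc (0:ℝ) 1, F (x, t) :=
    integral_integral_swap hind
  have hprim_int : Integrable (fun x => ∫ t in (0:ℝ)..x, f' t)
      (volume.restrict (Set.Ioc (0:ℝ) 1)) := by
    refine (hind.integral_prod_left).congr ?_
    filter_upwards [ae_restrict_mem measurableSet_Ioc] with x hx
    exact hinner1 x hx
  have key : (∫ x in (0:ℝ)..1, f x) = f 0 + ∫ t in (0:ℝ)..1, (1 - t) * f' t := by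
    rw [intervalIntegral.integral_of_le h2, intervalIntegral.integral_of_le h2]
    calc ∫ x in Set.Ioc (0:ℝ) 1, f x
        = ∫ x in Set.Ioc (0:ℝ) 1, (f 0 + ∫ t in (0:ℝ)..x, f' t) :=
          setIntegral_congr_fun measurableSet_Ioc fun x hx =>
            hac x (Set.Ioc_subset_Icc_self hx)
      _ = f 0 + ∫ x in Set.Ioc (0:ℝ) 1, (∫ t in (0:ℝ)..x, f' t) := by
          rw [integral_add (integrable_const _) hprim_int, integral_const, measureReal_def, measure_univ,
            ENNReal.toReal_one, one_smul]
      _ = f 0 + ∫ t in Set.Ioc (0:ℝ) 1, (1 - t) * f' t := by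
          congr 1
          calc ∫ x in Set.Ioc (0:ℝ) 1, (∫ t in (0:ℝ)..x, f' t)
              = ∫ x in Set.Ioc (0:ℝ) 1, ∫ t in Set.Ioc (0:ℝ) 1, F (x, t) := by
                refine integral_congr_ae ?_
                filter_upwards [ae_restrict_mem measurableSet_Ioc] with x hx
                exact (hinner1 x hx).symm
            _ = ∫ t in Set.Ioc (0:ℝ) 1, ∫ x in Set.Ioc (0:ℝ) 1, F (x, t) := hswap
            _ = ∫ t in Set.Ioc (0:ℝ) 1, (1 - t) * f' t := by
                refine integral_congr_ae ?_
                filter_upwards [ae_restrict_mem measurableSet_Ioc] with t ht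
                exact hinner2 t ht
  -- abbreviations
  set S : ℝ := ∫ t in (0:ℝ)..1, |f' t| ^ q with hSdef
  have hS : 0 ≤ S := by
    rw [hSdef]
    exact intervalIntegral.integral_nonneg h2 fun t _ => Real.rpow_nonneg (abs_nonneg _) q
  set X : ℝ := (γ ^ (-(q/2)) * S) ^ (1/q) with hXdef
  set Y : ℝ := (γ ^ (p/2) / (p + 1)) ^ (1/p) with hYdef
  have hAnn : 0 ≤ γ ^ (-(q/2)) * S := mul_nonneg (Real.rpow_nonneg hγ' _) hS
  have hBnn : 0 ≤ γ ^ (p/2) / (p + 1) :=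
    div_nonneg (Real.rpow_nonneg hγ' _) (by linarith)
  -- the two Hölder factor functions
  set u : ℝ → ℝ := fun t => γ ^ (-(1:ℝ)/2) * |f' t| with hudef
  set v : ℝ → ℝ := fun t => γ ^ ((1:ℝ)/2) * (1 - t) with hvdef
  -- Memℒp facts
  have hq0' : ENNReal.ofReal q ≠ 0 := by
    simp only [ne_eq, ENNReal.ofReal_eq_zero, not_le]; exact hq0
  have hqt : ENNReal.ofReal q ≠ ⊤ := ENNReal.ofReal_ne_top
  have hmemf' : MemLp f' (ENNReal.ofReal q) (volume.restrict (Set.Ioc (0:ℝ) 1)) := by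
    rw [← memLp_norm_rpow_iff hmeas hq0' hqt, ENNReal.div_self hq0' hqt,
      memLp_one_iff_integrable]
    refine (hf'Lq.1).congr ?_
    filter_upwards with t
    rw [ENNReal.toReal_ofReal hq0.le, Real.norm_eq_abs]
  have hmemu : MemLp u (ENNReal.ofReal q) (volume.restrict (Set.Ioc (0:ℝ) 1)) := by
    have := (hmemf'.norm).const_mul (γ ^ (-(1:ℝ)/2))
    simpa only [hudef, Real.norm_eq_abs] using this
  have hmemv : MemLp v (ENNReal.ofReal p) (volume.restrict (Set.Ioc (0:ℝ) 1)) := by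
    refine MemLp.of_bound ?_ (γ ^ ((1:ℝ)/2) * 1) ?_
    · exact (continuous_const.mul (continuous_const.sub continuous_id)).aestronglyMeasurable
    · filter_upwards [ae_restrict_mem measurableSet_Ioc] with t ht
      rw [hvdef]
      simp only [Real.norm_eq_abs, abs_mul]
      rw [abs_of_nonneg (Real.rpow_nonneg hγ' _)]
      refine mul_le_mul_of_nonneg_left ?_ (Real.rpow_nonneg hγ' _)
      rw [abs_of_nonneg (by linarith [ht.2] : (0:ℝ) ≤ 1 - t)]
      linarith [ht.1]
  have hunn : 0 ≤ᵐ[volume.restrict (Set.Ioc (0:ℝ) 1)] u := by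
    filter_upwards with t
    exact mul_nonneg (Real.rpow_nonneg hγ' _) (abs_nonneg _)
  have hvnn : 0 ≤ᵐ[volume.restrict (Set.Ioc (0:ℝ) 1)] v := by
    filter_upwards [ae_restrict_mem measurableSet_Ioc] with t ht
    exact mul_nonneg (Real.rpow_nonneg hγ' _) (by linarith [ht.2])
  -- Hölder for the integral
  have hholder := integral_mul_le_Lp_mul_Lq_of_nonneg hconj hunn hvnn hmemu hmemv
  -- compute the two factors
  have hfac1 : (∫ t in Set.Ioc (0:ℝ) 1, u t ^ q) = γ ^ (-(q/2)) * S := by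
    have he : ∀ t, u t ^ q = γ ^ (-(q/2)) * |f' t| ^ q := by
      intro t
      rw [hudef]
      rw [Real.mul_rpow (Real.rpow_nonneg hγ' _) (abs_nonneg _), ← Real.rpow_mul hγ',
        show (-1/2 : ℝ) * q = -(q/2) by ring]
    calc ∫ t in Set.Ioc (0:ℝ) 1, u t ^ q
        = ∫ t in Set.Ioc (0:ℝ) 1, γ ^ (-(q/2)) * |f' t| ^ q := by simp only [he]
      _ = γ ^ (-(q/2)) * ∫ t in Set.Ioc (0:ℝ) 1, |f' t| ^ q := integral_const_mul _ _
      _ = γ ^ (-(q/2)) * S := by rw [hSdef, intervalIntegral.integral_of_le h2]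
  have hpow01 : (∫ t in (0:ℝ)..1, (1 - t) ^ p) = 1 / (p + 1) := by
    rw [intervalIntegral.integral_comp_sub_left (fun s => s ^ p) 1]
    simp only [sub_zero, sub_self]
    rw [integral_rpow (Or.inl (by linarith : (-1:ℝ) < p)), Real.one_rpow,
      Real.zero_rpow (by linarith : p + 1 ≠ 0)]
    ring
  have hfac2 : (∫ t in Set.Ioc (0:ℝ) 1, v t ^ p) = γ ^ (p/2) / (p + 1) := by
    have he : ∀ t ∈ Set.Ioc (0:ℝ) 1, v t ^ p = γ ^ (p/2) * (1 - t) ^ p := by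
      intro t ht
      rw [hvdef]
      rw [Real.mul_rpow (Real.rpow_nonneg hγ' _) (by linarith [ht.2] : (0:ℝ) ≤ 1 - t),
        ← Real.rpow_mul hγ', show (1/2 : ℝ) * p = p/2 by ring]
    calc ∫ t in Set.Ioc (0:ℝ) 1, v t ^ p
        = ∫ t in Set.Ioc (0:ℝ) 1, γ ^ (p/2) * (1 - t) ^ p :=
          setIntegral_congr_fun measurableSet_Ioc fun t ht => he t ht
      _ = γ ^ (p/2) * ∫ t in Set.Ioc (0:ℝ) 1, (1 - t) ^ p := integral_const_mul _ _
      _ = γ ^ (p/2) / (p + 1) := by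
          rw [← intervalIntegral.integral_of_le h2, hpow01]; ring
  have hγc : γ ^ (-(1:ℝ)/2) * γ ^ ((1:ℝ)/2) = 1 := by
    rw [← Real.rpow_add hγ, show (-1/2 + 1/2 : ℝ) = 0 by norm_num, Real.rpow_zero]
  have hI : |∫ t in (0:ℝ)..1, (1 - t) * f' t| ≤ X * Y := by
    rw [intervalIntegral.integral_of_le h2]
    calc |∫ t in Set.Ioc (0:ℝ) 1, (1 - t) * f' t|
        ≤ ∫ t in Set.Ioc (0:ℝ) 1, ‖(1 - t) * f' t‖ := by
          rw [← Real.norm_eq_abs]; exact norm_integral_le_integral_norm _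
      _ = ∫ t in Set.Ioc (0:ℝ) 1, u t * v t := by
          refine integral_congr_ae ?_
          filter_upwards [ae_restrict_mem measurableSet_Ioc] with t ht
          have h2' : u t * v t = (1 - t) * |f' t| := by
            rw [hudef, hvdef]
            calc γ ^ (-(1:ℝ)/2) * |f' t| * (γ ^ ((1:ℝ)/2) * (1 - t))
                = (γ ^ (-(1:ℝ)/2) * γ ^ ((1:ℝ)/2)) * ((1 - t) * |f' t|) := by ring
              _ = (1 - t) * |f' t| := by rw [hγc, one_mul]
          rw [h2', Real.norm_eq_abs, abs_mul,
            abs_of_nonneg (by linarith [ht.2] : (0:ℝ) ≤ 1 - t)]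
      _ ≤ X * Y := by rw [hXdef, hYdef, ← hfac1, ← hfac2]; exact hholder
  have hXq : X ^ q = γ ^ (-(q/2)) * S := by
    rw [hXdef, ← Real.rpow_mul hAnn, one_div, inv_mul_cancel₀ hq0.ne', Real.rpow_one]
  have hYp : Y ^ p = γ ^ (p/2) / (p + 1) := by
    rw [hYdef, ← Real.rpow_mul hBnn, one_div, inv_mul_cancel₀ hp0.ne', Real.rpow_one]
  have hXnn : 0 ≤ X := by rw [hXdef]; exact Real.rpow_nonneg hAnn _
  have hYnn : 0 ≤ Y := by rw [hYdef]; exact Real.rpow_nonneg hBnn _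
  have hsum : |f 0| * 1 + X * Y ≤ (|f 0| ^ q + X ^ q) ^ (1/q) * (1 ^ p + Y ^ p) ^ (1/p) := by
    have h := Real.inner_le_Lp_mul_Lq_of_nonneg (s := Finset.univ) hconj
      (f := ![|f 0|, X]) (g := ![1, Y]) ?_ ?_
    · simpa [Fin.sum_univ_two] using h
    · intro i _
      fin_cases i
      · simp
      · simpa using hXnn
    · intro i _
      fin_cases i
      · simp
      · simpa using hYnn
  calc |∫ x in (0:ℝ)..1, f x|
      = |f 0 + ∫ t in (0:ℝ)..1, (1 - t) * f' t| := by rw [key]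
    _ ≤ |f 0| + |∫ t in (0:ℝ)..1, (1 - t) * f' t| := abs_add_le _ _
    _ ≤ |f 0| * 1 + X * Y := by rw [mul_one]; exact add_le_add_right hI _
    _ ≤ (|f 0| ^ q + X ^ q) ^ (1/q) * (1 ^ p + Y ^ p) ^ (1/p) := hsum
    _ = (|f 0| ^ q + γ ^ (-(q/2)) * S) ^ (1/q) * (1 + γ ^ (p/2) / (p + 1)) ^ (1/p) := by
        rw [hXq, hYp, Real.one_rpow]
end

section
/- For every real p ∈ (1,∞), the quantity τ_p := (2p - (p+1)(1 + 2^{p/(p+1)} - 2^{1/(p+1)})) / (4p² + 6p + (p+1)(1 + 2^{p/(p+1)} - 2^{1/(p+1)})) is strictly positive. -/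
open Real

noncomputable def auxF : ℝ → ℝ := fun t => 1 + Real.exp (Real.log 2 * t) - Real.exp (Real.log 2 * (1 - t)) - 2 * t

lemma auxF_hasDeriv (t : ℝ) :
    HasDerivAt auxF
      (Real.log 2 * Real.exp (Real.log 2 * t) + Real.log 2 * Real.exp (Real.log 2 * (1 - t)) - 2) t := by
  unfold auxF
  have h1 : HasDerivAt (fun t : ℝ => Real.exp (Real.log 2 * t)) (Real.log 2 * Real.exp (Real.log 2 * t)) t := by
    have := ((hasDerivAt_id t).const_mul (Real.log 2)).exp
    simpa [mul_comm] using this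
  have h2 : HasDerivAt (fun t : ℝ => Real.exp (Real.log 2 * (1 - t))) (-(Real.log 2) * Real.exp (Real.log 2 * (1 - t))) t := by
    have hlin : HasDerivAt (fun t : ℝ => Real.log 2 * (1 - t)) (-(Real.log 2)) t := by
      have := ((hasDerivAt_id t).const_sub (1:ℝ)).const_mul (Real.log 2)
      simpa using this
    simpa [mul_comm] using hlin.exp
  have h3 : HasDerivAt (fun t : ℝ => 2 * t) (2:ℝ) t := by
    simpa using (hasDerivAt_id t).const_mul (2:ℝ)
  have := ((h1.const_add (1:ℝ)).sub h2).sub h3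
  exact this.congr_deriv (by ring)

lemma auxF_deriv : deriv auxF = fun t =>
    Real.log 2 * Real.exp (Real.log 2 * t) + Real.log 2 * Real.exp (Real.log 2 * (1 - t)) - 2 := by
  funext t
  exact (auxF_hasDeriv t).deriv

lemma auxF_concave : StrictConcaveOn ℝ (Set.Icc (0:ℝ) (1/2)) auxF := by
  apply strictConcaveOn_of_deriv2_neg (convex_Icc _ _)
  · apply Continuous.continuousOn
    unfold auxF
    continuity
  · intro x hx
    rw [interior_Icc, Set.mem_Ioo] at hx
    have hd2 : deriv^[2] auxF x =
        Real.log 2 * (Real.log 2 * Real.exp (Real.log 2 * x))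
        - Real.log 2 * (Real.log 2 * Real.exp (Real.log 2 * (1 - x))) := by
      rw [Function.iterate_succ, Function.iterate_one, Function.comp_apply, auxF_deriv]
      have h1 : HasDerivAt (fun t : ℝ => Real.exp (Real.log 2 * t)) (Real.log 2 * Real.exp (Real.log 2 * x)) x := by
        have := ((hasDerivAt_id x).const_mul (Real.log 2)).exp
        simpa [mul_comm] using this
      have h2 : HasDerivAt (fun t : ℝ => Real.exp (Real.log 2 * (1 - t))) (-(Real.log 2) * Real.exp (Real.log 2 * (1 - x))) x := by
        have hlin : HasDerivAt (fun t : ℝ => Real.log 2 * (1 - t)) (-(Real.log 2)) x := by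
          have := ((hasDerivAt_id x).const_sub (1:ℝ)).const_mul (Real.log 2)
          simpa using this
        simpa [mul_comm] using hlin.exp
      have h := (((h1.const_mul (Real.log 2)).add (h2.const_mul (Real.log 2))).sub_const (2:ℝ)).deriv
      exact h.trans (by ring)
    rw [hd2]
    have hlog : 0 < Real.log 2 := Real.log_pos (by norm_num)
    have hxlt : Real.log 2 * x < Real.log 2 * (1 - x) := by
      apply mul_lt_mul_of_pos_left _ hlog
      linarith [hx.2]
    have := Real.exp_lt_exp.mpr hxlt
    nlinarith [mul_pos (mul_pos hlog hlog) (sub_pos.mpr this)]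

lemma auxF_pos {t : ℝ} (ht0 : 0 < t) (ht1 : t < 1/2) : 0 < auxF t := by
  have h0 : auxF 0 = 0 := by
    unfold auxF
    norm_num [Real.exp_log]
  have h12 : auxF (1/2) = 0 := by
    unfold auxF
    norm_num
  have h := auxF_concave.2
    (Set.mem_Icc.mpr ⟨le_refl (0:ℝ), by norm_num⟩)
    (Set.mem_Icc.mpr ⟨by norm_num, le_refl ((1:ℝ)/2)⟩)
    (show (0:ℝ) ≠ 1/2 by norm_num)
    (show (0:ℝ) < 1 - 2*t by linarith) (show (0:ℝ) < 2*t by linarith)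
    (show (1 - 2*t) + 2*t = 1 by ring)
  rw [smul_eq_mul, smul_eq_mul, smul_eq_mul, smul_eq_mul, h0, h12] at h
  have e : (1 - 2*t) * 0 + 2*t * (1/2) = t := by ring
  rw [e] at h
  linarith

theorem stmt4 (p : ℝ) (hp : 1 < p) :
    0 < (2*p - (p+1)*(1 + 2 ^ (p/(p+1)) - 2 ^ (1/(p+1)))) /
        (4*p^2 + 6*p + (p+1)*(1 + 2 ^ (p/(p+1)) - 2 ^ (1/(p+1)))) := by
  have hp1 : (0:ℝ) < p + 1 := by linarith
  set t := 1/(p+1) with ht_def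
  have ht0 : 0 < t := by positivity
  have ht1 : t < 1/2 := by
    rw [ht_def, div_lt_div_iff₀ hp1 (by norm_num)]
    linarith
  have hpt : p/(p+1) = 1 - t := by
    rw [ht_def]; field_simp; ring
  have hrw1 : (2:ℝ) ^ (p/(p+1)) = Real.exp (Real.log 2 * (1 - t)) := by
    rw [hpt, Real.rpow_def_of_pos (by norm_num)]
  have hrw2 : (2:ℝ) ^ (1/(p+1)) = Real.exp (Real.log 2 * t) := by
    rw [← ht_def, Real.rpow_def_of_pos (by norm_num)]
  have hf := auxF_pos ht0 ht1
  unfold auxF at hf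
  -- hf : 0 < 1 + exp(L*t) - exp(L*(1-t)) - 2*t
  have hexpr : 1 + (2:ℝ) ^ (p/(p+1)) - 2 ^ (1/(p+1)) < 2 - 2*t := by
    rw [hrw1, hrw2]; linarith
  have hptmul : (p+1) * t = 1 := by
    rw [ht_def]; field_simp
  have hnum : 0 < 2*p - (p+1)*(1 + 2 ^ (p/(p+1)) - 2 ^ (1/(p+1))) := by
    have := mul_lt_mul_of_pos_left hexpr hp1
    nlinarith
  have hposexpr : 0 < 1 + (2:ℝ) ^ (p/(p+1)) - 2 ^ (1/(p+1)) := by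
    rw [hrw1, hrw2]
    have : Real.exp (Real.log 2 * t) < Real.exp (Real.log 2 * (1 - t)) := by
      apply Real.exp_lt_exp.mpr
      apply mul_lt_mul_of_pos_left _ (Real.log_pos (by norm_num))
      linarith
    linarith
  have hden : 0 < 4*p^2 + 6*p + (p+1)*(1 + 2 ^ (p/(p+1)) - 2 ^ (1/(p+1))) := by
    nlinarith
  exact div_pos hnum hden
end

section
/- Let p ≥ 1 and a = 1 - 2^{-1/(p+1)}. Define h₁(x) = ((1-(1-a)^p)/a)·min(x,a) and h₂(x) = 1_{[0,a]}(x)·((1-(1-x)^p) - (x/a)(1-(1-a)^p)) for x ∈ [0,1]. Then ∫₀¹ (h₁(x) + h₂(x)) dx = (1/2)·p/(p+1). -/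
open MeasureTheory

theorem stmt5 (p : ℝ) (hp : 1 ≤ p) (a : ℝ) (ha : a = 1 - 2 ^ (-(1/(p+1))))
    (h₁ h₂ : ℝ → ℝ)
    (hh₁ : ∀ x ∈ Set.Icc (0:ℝ) 1, h₁ x = (1 - (1-a)^p)/a * min x a)
    (hh₂ : ∀ x ∈ Set.Icc (0:ℝ) 1,
      h₂ x = Set.indicator (Set.Icc 0 a)
        (fun x => (1 - (1-x)^p) - x/a * (1 - (1-a)^p)) x) :
    ∫ x in (0:ℝ)..1, (h₁ x + h₂ x) = (1/2) * (p/(p+1)) := by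
  have hp1 : (0:ℝ) < p + 1 := by linarith
  set t : ℝ := 2 ^ (-(1/(p+1))) with htdef
  have ht0 : 0 < t := Real.rpow_pos_of_pos (by norm_num) _
  have ht1 : t < 1 := by
    apply Real.rpow_lt_one_of_one_lt_of_neg (by norm_num)
    simp only [neg_neg, Left.neg_neg_iff]
    positivity
  have ha0 : 0 < a := by rw [ha]; linarith
  have ha1 : a < 1 := by rw [ha]; linarith
  have hta : 1 - a = t := by rw [ha]; ring
  have htp1 : t ^ (p+1) = 1/2 := by
    rw [htdef, ← Real.rpow_mul (by norm_num)]
    have : -(1/(p+1)) * (p+1) = -1 := by field_simp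
    rw [this, Real.rpow_neg (by norm_num), Real.rpow_one]
    norm_num
  set c : ℝ := 1 - (1-a)^p with hcdef
  set g : ℝ → ℝ := fun x => (1 - (1-x)^p) - x/a * c with hgdef
  have hc1x : Continuous fun x : ℝ => ((1:ℝ)-x)^p := by
    apply Continuous.rpow_const (continuous_const.sub continuous_id)
    intro x; right; linarith
  have hgc : Continuous g := by
    apply Continuous.sub (continuous_const.sub hc1x)
    exact (continuous_id.div_const a).mul continuous_const
  have hfc : Continuous fun x : ℝ => c/a * min x a :=
    continuous_const.mul (continuous_id.min continuous_const)
  set f : ℝ → ℝ := fun x => c/a * min x a + Set.indicator (Set.Icc 0 a) g x with hfdef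
  have hintf : ∀ u v : ℝ, IntervalIntegrable f volume u v := by
    intro u v
    apply IntervalIntegrable.add (hfc.intervalIntegrable u v)
    constructor
    · exact (hgc.integrableOn_Ioc).indicator measurableSet_Icc
    · exact (hgc.integrableOn_Ioc).indicator measurableSet_Icc
  have hcong : ∫ x in (0:ℝ)..1, (h₁ x + h₂ x) = ∫ x in (0:ℝ)..1, f x := by
    apply intervalIntegral.integral_congr
    intro x hx
    rw [Set.uIcc_of_le (by norm_num : (0:ℝ) ≤ 1)] at hx
    show h₁ x + h₂ x = f x
    rw [hh₁ x hx, hh₂ x hx]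
  have hsplit : ∫ x in (0:ℝ)..1, f x = (∫ x in (0:ℝ)..a, f x) + ∫ x in a..(1:ℝ), f x :=
    (intervalIntegral.integral_add_adjacent_intervals (hintf 0 a) (hintf a 1)).symm
  have hI1 : ∫ x in (0:ℝ)..a, f x = ∫ x in (0:ℝ)..a, (1 - (1-x)^p) := by
    apply intervalIntegral.integral_congr
    intro x hx
    rw [Set.uIcc_of_le (le_of_lt ha0)] at hx
    show f x = 1 - (1-x)^p
    simp only [hfdef]
    rw [Set.indicator_of_mem (Set.mem_Icc.mpr ⟨hx.1, hx.2⟩) g]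
    simp only [hgdef]
    rw [min_eq_left hx.2]
    field_simp
    ring
  have hI2 : ∫ x in a..(1:ℝ), f x = ∫ x in a..(1:ℝ), c := by
    apply intervalIntegral.integral_congr
    intro x hx
    rw [Set.uIcc_of_le (le_of_lt ha1)] at hx
    show f x = c
    simp only [hfdef]
    rw [min_eq_right hx.1]
    rcases eq_or_lt_of_le hx.1 with h | h
    · rw [Set.indicator_of_mem (Set.mem_Icc.mpr (by constructor <;> linarith)) g]
      simp only [hgdef, ← h]
      field_simp
      linarith [hcdef]
    · rw [Set.indicator_of_notMem (by simp only [Set.mem_Icc, not_and]; intro _; linarith) g]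
      field_simp
      exact add_zero c
  have hrpow : ∫ x in (0:ℝ)..a, ((1:ℝ)-x)^p = (1 - t^(p+1))/(p+1) := by
    have hcs := intervalIntegral.integral_comp_sub_left (a := (0:ℝ)) (b := a) (fun x => x ^ p) 1
    rw [hcs, integral_rpow (Or.inl (by linarith))]
    have h10 : (1:ℝ) - 0 = 1 := sub_zero 1
    rw [h10, Real.one_rpow, hta]
  have hI1v : ∫ x in (0:ℝ)..a, ((1:ℝ) - (1-x)^p) = a - (1 - t^(p+1))/(p+1) := by
    rw [intervalIntegral.integral_sub intervalIntegrable_const (hc1x.intervalIntegrable 0 a)]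
    rw [intervalIntegral.integral_const, hrpow]
    simp
  have hI2v : ∫ x in a..(1:ℝ), c = c * (1-a) := by
    rw [intervalIntegral.integral_const, smul_eq_mul]; ring
  have hcv : c = 1 - t^p := by rw [hcdef, hta]
  have http : t * t^p = t^(p+1) := by
    rw [Real.rpow_add ht0, Real.rpow_one]; ring
  rw [hcong, hsplit, hI1, hI2, hI1v, hI2v, hcv, htp1]
  rw [hta]
  have hkey : (1 - t^p) * t = t - t^(p+1) := by rw [← http]; ring
  rw [hkey, htp1]
  have haeq : a = 1 - t := ha
  rw [haeq]
  field_simp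
  ring
end

section
/- Let p ≥ 1 and a = 1 - 2^{-1/(p+1)}. Define h₁(x) = ((1-(1-a)^p)/a)·min(x,a) and h₃(x) = 1_{[a,1]}(x)·((1-(1-x)^p) - (1-(1-a)^p)) for x ∈ [0,1]. Then ∫₀¹ (h₁(x) + h₃(x)) dx = (1/2)·p/(p+1) + (1 + 2^{p/(p+1)} - 2^{1/(p+1)})/4. -/
open MeasureTheory

open intervalIntegral in
theorem stmt6 (p : ℝ) (hp : 1 ≤ p) (a : ℝ) (ha : a = 1 - 2 ^ (-(1/(p+1))))
    (h₁ h₃ : ℝ → ℝ)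
    (hh₁ : ∀ x ∈ Set.Icc (0:ℝ) 1, h₁ x = (1 - (1-a)^p)/a * min x a)
    (hh₃ : ∀ x ∈ Set.Icc (0:ℝ) 1,
      h₃ x = Set.indicator (Set.Icc a 1)
        (fun x => (1 - (1-x)^p) - (1 - (1-a)^p)) x) :
    ∫ x in (0:ℝ)..1, (h₁ x + h₃ x)
      = (1/2) * (p/(p+1)) + (1 + 2 ^ (p/(p+1)) - 2 ^ (1/(p+1))) / 4 := by
  have hp1 : (0:ℝ) < p + 1 := by linarith
  set b : ℝ := 2 ^ (-(1/(p+1))) with hbdef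
  have hb0 : 0 < b := Real.rpow_pos_of_pos (by norm_num) _
  have hb1 : b < 1 := by
    apply Real.rpow_lt_one_of_one_lt_of_neg (by norm_num)
    have : 0 < 1/(p+1) := by positivity
    linarith
  have hab : 1 - a = b := by rw [ha]; ring
  have ha0 : 0 < a := by rw [ha]; linarith
  have ha1 : a ≤ 1 := by rw [ha]; linarith
  -- key pointwise identities
  have key1 : ∀ x ∈ Set.uIcc (0:ℝ) a, h₁ x + h₃ x = (1 - (1-a)^p)/a * x := by
    intro x hx
    rw [Set.uIcc_of_le ha0.le] at hx
    have hx01 : x ∈ Set.Icc (0:ℝ) 1 := ⟨hx.1, hx.2.trans ha1⟩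
    have h3z : h₃ x = 0 := by
      rw [hh₃ x hx01]
      rcases eq_or_lt_of_le hx.2 with h | h
      · rw [Set.indicator_of_mem (show x ∈ Set.Icc a 1 from ⟨h.ge, hx01.2⟩)]
        rw [← h]; ring
      · exact Set.indicator_of_notMem (fun hm => absurd hm.1 (not_le.mpr h)) _
    rw [hh₁ x hx01, h3z, min_eq_left hx.2, add_zero]
  have key2 : ∀ x ∈ Set.uIcc a (1:ℝ), h₁ x + h₃ x = 1 - (1-x)^p := by
    intro x hx
    rw [Set.uIcc_of_le ha1] at hx
    have hx01 : x ∈ Set.Icc (0:ℝ) 1 := ⟨ha0.le.trans hx.1, hx.2⟩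
    rw [hh₁ x hx01, hh₃ x hx01, min_eq_right hx.1,
      Set.indicator_of_mem hx, div_mul_cancel₀ _ (ne_of_gt ha0)]
    ring
  have hcontp : Continuous (fun x : ℝ => (1-x)^p) := by
    apply Continuous.comp (g := fun y : ℝ => y ^ p)
    · exact continuous_iff_continuousAt.mpr fun y =>
        Real.continuousAt_rpow_const y p (Or.inr (by linarith))
    · exact continuous_const.sub continuous_id
  have hcontf2 : Continuous (fun x : ℝ => 1 - (1-x)^p) :=
    continuous_const.sub hcontp
  have hcont1 : ContinuousOn (fun x => h₁ x + h₃ x) (Set.uIcc (0:ℝ) a) :=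
    (Continuous.continuousOn (by fun_prop)).congr key1
  have hcont2 : ContinuousOn (fun x => h₁ x + h₃ x) (Set.uIcc a (1:ℝ)) :=
    hcontf2.continuousOn.congr key2
  have I1 : IntervalIntegrable (fun x => h₁ x + h₃ x) volume 0 a :=
    hcont1.intervalIntegrable
  have I2 : IntervalIntegrable (fun x => h₁ x + h₃ x) volume a 1 :=
    hcont2.intervalIntegrable
  rw [← intervalIntegral.integral_add_adjacent_intervals I1 I2]
  -- compute first integral
  have e1 : ∫ x in (0:ℝ)..a, (h₁ x + h₃ x) = (1 - (1-a)^p) * a / 2 := by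
    rw [intervalIntegral.integral_congr key1, intervalIntegral.integral_const_mul,
      integral_id]
    field_simp
    ring
  -- compute second integral
  have e2 : ∫ x in a..(1:ℝ), (h₁ x + h₃ x)
      = (1 - a) - (1-a)^(p+1)/(p+1) := by
    rw [intervalIntegral.integral_congr key2]
    rw [intervalIntegral.integral_sub intervalIntegrable_const
      (hcontp.intervalIntegrable _ _), intervalIntegral.integral_const]
    have h0 : ∫ x in a..(1:ℝ), (1-x)^p = ∫ x in (1-1:ℝ)..(1-a), x ^ p :=
      integral_comp_sub_left (fun x => x ^ p) 1
    rw [h0, show (1:ℝ)-1 = 0 by norm_num,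
      integral_rpow (Or.inl (by linarith)),
      Real.zero_rpow (by positivity : p + 1 ≠ 0)]
    simp [smul_eq_mul]
  rw [e1, e2, hab]
  -- now pure algebra with rpow identities
  have hBb : b ^ p * b = 1/2 := by
    rw [← Real.rpow_add_one (ne_of_gt hb0), hbdef,
      ← Real.rpow_mul (by norm_num : (0:ℝ) ≤ 2),
      show (-(1/(p+1)))*(p+1) = -1 by field_simp]
    norm_num
  have h2p : (2:ℝ)^(p/(p+1)) = 2*b := by
    calc (2:ℝ)^(p/(p+1)) = 2^(1 + -(1/(p+1))) := by
          congr 1; field_simp; ring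
      _ = 2^(1:ℝ) * 2^(-(1/(p+1))) := Real.rpow_add (by norm_num) _ _
      _ = 2 * b := by rw [Real.rpow_one, hbdef]
  have h2q : (2:ℝ)^(1/(p+1)) = 2*b^p := by
    calc (2:ℝ)^(1/(p+1)) = 2^(1 + -(1/(p+1))*p) := by
          congr 1; field_simp; ring
      _ = 2^(1:ℝ) * 2^(-(1/(p+1))*p) := Real.rpow_add (by norm_num) _ _
      _ = 2 * b^p := by
          rw [Real.rpow_one, hbdef, ← Real.rpow_mul (by norm_num : (0:ℝ) ≤ 2)]
  rw [h2p, h2q, ha, Real.rpow_add_one (ne_of_gt hb0), hBb]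
  clear_value b
  set B : ℝ := b ^ p with hBdef
  clear_value B
  have hinv : (1 + p) * (1 + p)⁻¹ = 1 := mul_inv_cancel₀ (by linarith)
  linear_combination hBb / 2 - hinv / 2
end
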